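/- For the dyadic spiral u as above and R = [[1, -2],[1, 1]]: at each point t_n = 2^{-n}, u(t_n) lies either on the line u₁ + u₂ = 0 or on the line u₁ - 2u₂ = 0; moreover for t in any interval [2^{-(4k+1)}, 2^{-4k}] (where u₂ increases) one has (R u(t))₂ = u₁(t) + u₂(t) ≤ 0. -/

import Mathlib

open Set Matrix

/-- The vertices of Mandelbaum's dyadic spiral: `SpiralP n` is the value of the
spiral at the dyadic time `2 ^ (-n)`. -/
noncomputable def SpiralP (n : ℕ) : Fin 2 → ℝ :=
  let k : ℤ := (n / 4 : ℕ)
  if n % 4 = 0 then ![-(2:ℝ) ^ (-2 * k), (2:ℝ) ^ (-2 * k)]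
  else if n % 4 = 1 then ![-(2:ℝ) ^ (-2 * k), -(2:ℝ) ^ (-2 * k - 1)]
  else if n % 4 = 2 then ![(2:ℝ) ^ (-2 * k - 1), -(2:ℝ) ^ (-2 * k - 1)]
  else ![(2:ℝ) ^ (-2 * k - 1), (2:ℝ) ^ (-2 * k - 2)]

/-- `u : [0,1] → ℝ²` is the dyadic spiral: `u 0 = 0`, `u (2 ^ (-n)) = SpiralP n`,
with linear interpolation on each interval `[2 ^ (-(n+1)), 2 ^ (-n)]`. -/
def IsSpiral (u : ℝ → Fin 2 → ℝ) : Prop :=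
  u 0 = 0 ∧
  ∀ n : ℕ, ∀ s ∈ Set.Icc (0:ℝ) 1,
    u ((1 - s) * (2:ℝ) ^ (-(n:ℤ) - 1) + s * (2:ℝ) ^ (-(n:ℤ)))
      = fun j => (1 - s) * SpiralP (n + 1) j + s * SpiralP n j

/-! The vertices alternate between the lines `x + y = 0` (at `n ≡ 0, 2 mod 4`) and `x = 2 y`
(at `n ≡ 1, 3 mod 4`). On `[2^{-(4k+1)}, 2^{-4k}]` the spiral runs along a segment from a vertex
on `x + y = 0` to one in the half-plane `x + y ≤ 0`, so it stays in that half-plane. -/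

lemma two_mul_two_zpow_sub_one (m : ℤ) : 2 * (2 : ℝ) ^ (m - 1) = 2 ^ m := by
  rw [zpow_sub_one₀ two_ne_zero]
  field_simp

lemma spiralP_four_mul (k : ℕ) :
    SpiralP (4 * k) = ![-(2 : ℝ) ^ (-2 * (k : ℤ)), (2 : ℝ) ^ (-2 * (k : ℤ))] := by
  simp [SpiralP]

lemma spiralP_four_mul_add_one (k : ℕ) :
    SpiralP (4 * k + 1) = ![-(2 : ℝ) ^ (-2 * (k : ℤ)), -(2 : ℝ) ^ (-2 * (k : ℤ) - 1)] := by
  simp only [SpiralP, show (4 * k + 1) / 4 = k by omega, show (4 * k + 1) % 4 = 1 by omega]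
  rfl

lemma spiralP_four_mul_add_two (k : ℕ) :
    SpiralP (4 * k + 2) = ![(2 : ℝ) ^ (-2 * (k : ℤ) - 1), -(2 : ℝ) ^ (-2 * (k : ℤ) - 1)] := by
  simp only [SpiralP, show (4 * k + 2) / 4 = k by omega, show (4 * k + 2) % 4 = 2 by omega]
  rfl

lemma spiralP_four_mul_add_three (k : ℕ) :
    SpiralP (4 * k + 3) = ![(2 : ℝ) ^ (-2 * (k : ℤ) - 1), (2 : ℝ) ^ (-2 * (k : ℤ) - 2)] := by
  simp only [SpiralP, show (4 * k + 3) / 4 = k by omega, show (4 * k + 3) % 4 = 3 by omega]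
  rfl

lemma spiralP_add_eq_zero_or_sub_two_mul_eq_zero (n : ℕ) :
    SpiralP n 0 + SpiralP n 1 = 0 ∨ SpiralP n 0 - 2 * SpiralP n 1 = 0 := by
  obtain ⟨k, r, hr, rfl⟩ : ∃ k r, r < 4 ∧ n = 4 * k + r := ⟨n / 4, n % 4, by omega, by omega⟩
  interval_cases r
  · simp [spiralP_four_mul]
  · right
    simp [spiralP_four_mul_add_one, two_mul_two_zpow_sub_one]
  · simp [spiralP_four_mul_add_two]
  · right
    simp only [spiralP_four_mul_add_three, Matrix.cons_val_zero, Matrix.cons_val_one]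
    rw [show -2 * (k : ℤ) - 2 = -2 * k - 1 - 1 by ring, two_mul_two_zpow_sub_one, sub_self]

lemma spiralP_four_mul_add_one_sum_nonpos (k : ℕ) :
    SpiralP (4 * k + 1) 0 + SpiralP (4 * k + 1) 1 ≤ 0 := by
  simp only [spiralP_four_mul_add_one, Matrix.cons_val_zero, Matrix.cons_val_one]
  linarith [zpow_pos (two_pos : (0 : ℝ) < 2) (-2 * (k : ℤ)),
    zpow_pos (two_pos : (0 : ℝ) < 2) (-2 * (k : ℤ) - 1)]

namespace IsSpiral

variable {u : ℝ → Fin 2 → ℝ}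

lemma apply_two_zpow_neg (hu : IsSpiral u) (n : ℕ) : u ((2 : ℝ) ^ (-(n : ℤ))) = SpiralP n := by
  simpa using hu.2 n 1 (by simp)

lemma exists_apply_eq_convex_combination (hu : IsSpiral u) (n : ℕ) {t : ℝ}
    (ht : t ∈ Icc ((2 : ℝ) ^ (-(n : ℤ) - 1)) ((2 : ℝ) ^ (-(n : ℤ)))) :
    ∃ s ∈ Icc (0 : ℝ) 1, u t = fun j => (1 - s) * SpiralP (n + 1) j + s * SpiralP n j := by
  have hle : (2 : ℝ) ^ (-(n : ℤ) - 1) ≤ 2 ^ (-(n : ℤ)) :=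
    zpow_le_zpow_right₀ one_le_two (by omega)
  rw [← segment_eq_Icc hle] at ht
  obtain ⟨a, s, ha, hs, hsum, rfl⟩ := ht
  obtain rfl : a = 1 - s := by linarith
  exact ⟨s, ⟨hs, by linarith⟩, hu.2 n s ⟨hs, by linarith⟩⟩

end IsSpiral

theorem spiral_on_lines (u : ℝ → Fin 2 → ℝ) (hu : IsSpiral u) :
    (∀ n : ℕ, u ((2:ℝ) ^ (-(n:ℤ))) 0 + u ((2:ℝ) ^ (-(n:ℤ))) 1 = 0
        ∨ u ((2:ℝ) ^ (-(n:ℤ))) 0 - 2 * u ((2:ℝ) ^ (-(n:ℤ))) 1 = 0)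
    ∧ ∀ k : ℕ, ∀ t ∈ Set.Icc ((2:ℝ) ^ (-(4 * (k:ℤ)) - 1)) ((2:ℝ) ^ (-(4 * (k:ℤ)))),
        u t 0 + u t 1 ≤ 0 := by
  refine ⟨fun n => ?_, fun k t ht => ?_⟩
  · rw [hu.apply_two_zpow_neg]
    exact spiralP_add_eq_zero_or_sub_two_mul_eq_zero n
  · obtain ⟨s, ⟨hs0, hs1⟩, hut⟩ :=
      hu.exists_apply_eq_convex_combination (4 * k) (t := t) (by exact_mod_cast ht)
    have hstart : SpiralP (4 * k) 0 + SpiralP (4 * k) 1 = 0 := by simp [spiralP_four_mul]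
    have hend := spiralP_four_mul_add_one_sum_nonpos k
    rw [hut]
    nlinarith
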